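/- arXiv:2203.00083 — 6 statements merged into one kernel-verified Lean document; each statement's English description precedes it below -/
import Mathlib

section
/- Let f : ℝ⁺ → ℝ⁺ be defined by f(x) = e^{-λ/x} for a fixed λ > 0. If x, y, h > 0 with λ/(x+y) > 2 and h ≤ x ≤ y, then f(x) + f(y) ≤ f(x-h) + f(y+h). -/
open Real Set Filter

private lemma gderiv (lam t : ℝ) (ht : t ≠ 0) :
    HasDerivAt (fun s : ℝ => Real.exp (-lam / s))
      (Real.exp (-lam / t) * (lam / t ^ 2)) t := by
  have h1 : HasDerivAt (fun s : ℝ => -lam / s) (lam / t ^ 2) t := by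
    have := (hasDerivAt_inv ht).const_mul (-lam)
    have heq : -lam * -(t ^ 2)⁻¹ = lam / t ^ 2 := by field_simp
    simpa [div_eq_mul_inv, heq] using this
  simpa using h1.exp

private lemma gderiv2 (lam t : ℝ) (ht : t ≠ 0) :
    HasDerivAt (fun s : ℝ => Real.exp (-lam / s) * (lam / s ^ 2))
      (Real.exp (-lam / t) * (lam / t ^ 2) * (lam / t ^ 2)
        + Real.exp (-lam / t) * (-2 * lam / t ^ 3)) t := by
  have h2 : HasDerivAt (fun s : ℝ => lam / s ^ 2) (-2 * lam / t ^ 3) t := by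
    have hpow : HasDerivAt (fun s : ℝ => s ^ 2) (2 * t) t := by
      simpa using hasDerivAt_pow 2 t
    have h2' := (hpow.inv (pow_ne_zero 2 ht)).const_mul lam
    have heq : lam * -(2 * t / ((t ^ 2) ^ 2)) = -2 * lam / t ^ 3 := by
      field_simp
    simp only [div_eq_mul_inv] at heq ⊢
    refine h2'.congr_deriv ?_
    field_simp
  exact (gderiv lam t ht).mul h2

private lemma Fconvex (lam : ℝ) (hlam : 0 < lam) :
    ConvexOn ℝ (Icc 0 (lam / 2))
      (fun t : ℝ => if t = 0 then 0 else Real.exp (-lam / t)) := by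
  set F : ℝ → ℝ := fun t => if t = 0 then 0 else Real.exp (-lam / t) with hF
  have hFeq : ∀ t : ℝ, 0 < t → F =ᶠ[nhds t] fun s => Real.exp (-lam / s) := by
    intro t ht
    filter_upwards [Ioi_mem_nhds ht] with s hs
    simp [F, (ne_of_gt (mem_Ioi.mp hs))]
  have hint : interior (Icc (0:ℝ) (lam / 2)) = Ioo 0 (lam / 2) := interior_Icc
  have hcont : ContinuousOn F (Icc 0 (lam / 2)) := by
    intro t ht
    rcases eq_or_lt_of_le ht.1 with h0 | h0
    · subst h0
      apply ContinuousWithinAt.mono _ Icc_subset_Ici_self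
      rw [← continuousWithinAt_Ioi_iff_Ici]
      have h1 : Tendsto (fun s : ℝ => lam * s⁻¹) (nhdsWithin 0 (Ioi 0)) atTop :=
        tendsto_inv_nhdsGT_zero.const_mul_atTop hlam
      have h2 : Tendsto (fun s : ℝ => -lam / s) (nhdsWithin 0 (Ioi 0)) atBot := by
        refine (tendsto_neg_atTop_atBot.comp h1).congr fun s => ?_
        simp [Function.comp, neg_div, div_eq_mul_inv]
      have h3 : Tendsto F (nhdsWithin 0 (Ioi 0)) (nhds 0) := by
        have h4 := Real.tendsto_exp_atBot.comp h2
        refine h4.congr' ?_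
        filter_upwards [self_mem_nhdsWithin] with s hs
        simp [F, (ne_of_gt (mem_Ioi.mp hs))]
      have hF0 : F 0 = 0 := by simp [F]
      unfold ContinuousWithinAt
      rw [hF0]
      exact h3
    · exact ((gderiv lam t h0.ne').continuousAt.congr_of_eventuallyEq
        (hFeq t h0)).continuousWithinAt
  refine convexOn_of_hasDerivWithinAt2_nonneg (convex_Icc _ _) hcont
    (f' := fun t => Real.exp (-lam / t) * (lam / t ^ 2))
    (f'' := fun t => Real.exp (-lam / t) * (lam / t ^ 2) * (lam / t ^ 2)
        + Real.exp (-lam / t) * (-2 * lam / t ^ 3)) ?_ ?_ ?_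
  · intro t ht
    rw [hint] at ht ⊢
    exact ((gderiv lam t ht.1.ne').congr_of_eventuallyEq
      (hFeq t ht.1)).hasDerivWithinAt
  · intro t ht
    rw [hint] at ht ⊢
    exact (gderiv2 lam t ht.1.ne').hasDerivWithinAt
  · intro t ht
    rw [hint] at ht
    have ht0 := ht.1
    have htl : 2 * t ≤ lam := by linarith [ht.2]
    show (0:ℝ) ≤ Real.exp (-lam / t) * (lam / t ^ 2) * (lam / t ^ 2)
        + Real.exp (-lam / t) * (-2 * lam / t ^ 3)
    have key : Real.exp (-lam / t) * (lam / t ^ 2) * (lam / t ^ 2)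
        + Real.exp (-lam / t) * (-2 * lam / t ^ 3)
        = Real.exp (-lam / t) * (lam * (lam - 2 * t)) / t ^ 4 := by
      field_simp
      ring
    rw [key]
    apply div_nonneg
    · exact mul_nonneg (Real.exp_pos _).le (mul_nonneg hlam.le (by linarith))
    · positivity

/-- For fixed `λ > 0` let `f x = exp (-λ/x)` on the positive reals, extended by the
convention `f 0 = 0`.  If `x, y, h > 0`, `λ/(x+y) > 2`, and `h ≤ x ≤ y`, then
`f x + f y ≤ f (x - h) + f (y + h)`. -/
theorem stmt0 (lam x y h : ℝ) (hlam : 0 < lam) (hx : 0 < x) (hy : 0 < y) (hh : 0 < h)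
    (hcond : 2 < lam / (x + y)) (hhx : h ≤ x) (hxy : x ≤ y) :
    Real.exp (-lam / x) + Real.exp (-lam / y) ≤
      (if x - h = 0 then 0 else Real.exp (-lam / (x - h))) + Real.exp (-lam / (y + h)) := by
  set F : ℝ → ℝ := fun t => if t = 0 then 0 else Real.exp (-lam / t) with hFdef
  have hxysum : 2 * (x + y) < lam := by
    have hxy0 : (0:ℝ) < x + y := by linarith
    rw [lt_div_iff₀ hxy0] at hcond
    linarith
  have hconv := Fconvex lam hlam
  set a := x - h with ha
  set b := y + h with hb
  have ha0 : 0 ≤ a := by rw [ha]; linarith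
  have hmema : a ∈ Icc (0:ℝ) (lam / 2) := ⟨ha0, by rw [ha]; linarith⟩
  have hmemb : b ∈ Icc (0:ℝ) (lam / 2) := ⟨by rw [hb]; linarith, by rw [hb]; linarith⟩
  have hd : (0:ℝ) < b - a := by rw [ha, hb]; linarith
  set d := b - a with hdd
  have hd0 : d ≠ 0 := ne_of_gt hd
  have hax : a ≤ x := by rw [ha]; linarith
  have hxb : x ≤ b := by rw [hb]; linarith
  have hyb : y ≤ b := by rw [hb]; linarith
  have hay : a ≤ y := by rw [ha]; linarith
  have c1 : F x ≤ (b - x) / d * F a + (x - a) / d * F b := by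
    have h1 : (0:ℝ) ≤ (b - x) / d := by apply div_nonneg <;> linarith
    have h2 : (0:ℝ) ≤ (x - a) / d := by apply div_nonneg <;> linarith
    have h3 : (b - x) / d + (x - a) / d = 1 := by
      rw [← add_div, div_eq_one_iff_eq hd0, hdd]; ring
    have := hconv.2 hmema hmemb h1 h2 h3
    simp only [smul_eq_mul] at this
    have hxe : (b - x) / d * a + (x - a) / d * b = x := by
      rw [div_mul_eq_mul_div, div_mul_eq_mul_div, ← add_div, div_eq_iff hd0, hdd]
      ring
    rwa [hxe] at this
  have c2 : F y ≤ (b - y) / d * F a + (y - a) / d * F b := by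
    have h1 : (0:ℝ) ≤ (b - y) / d := by apply div_nonneg <;> linarith
    have h2 : (0:ℝ) ≤ (y - a) / d := by apply div_nonneg <;> linarith
    have h3 : (b - y) / d + (y - a) / d = 1 := by
      rw [← add_div, div_eq_one_iff_eq hd0, hdd]; ring
    have := hconv.2 hmema hmemb h1 h2 h3
    simp only [smul_eq_mul] at this
    have hye : (b - y) / d * a + (y - a) / d * b = y := by
      rw [div_mul_eq_mul_div, div_mul_eq_mul_div, ← add_div, div_eq_iff hd0, hdd]
      ring
    rwa [hye] at this
  have hsum1 : (b - x) / d + (b - y) / d = 1 := by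
    rw [← add_div, div_eq_one_iff_eq hd0, hdd, ha, hb]; ring
  have hsum2 : (x - a) / d + (y - a) / d = 1 := by
    rw [← add_div, div_eq_one_iff_eq hd0, hdd, ha, hb]; ring
  have hFx : F x = Real.exp (-lam / x) := by simp [F, hx.ne']
  have hFy : F y = Real.exp (-lam / y) := by simp [F, hy.ne']
  have hFb : F b = Real.exp (-lam / (y + h)) := by
    rw [hb]; simp [F, (by linarith : y + h ≠ 0)]
  have hgoal : F x + F y ≤ F a + F b := by
    have hadd := add_le_add c1 c2
    have hcollect : (b - x) / d * F a + (x - a) / d * F b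
        + ((b - y) / d * F a + (y - a) / d * F b) = F a + F b := by
      linear_combination F a * hsum1 + F b * hsum2
    linarith
  rw [← hFx, ← hFy, ← hFb]
  have hFa : F a = (if a = 0 then 0 else Real.exp (-lam / a)) := rfl
  calc F x + F y ≤ F a + F b := hgoal
    _ = (if a = 0 then 0 else Real.exp (-lam / a)) + F b := by rw [hFa]
end

section
/- If the number of voters N is odd and every voter's preference order is single-peaked with respect to a common linear order over the candidates, then the winner of the median voting rule (with respect to that order) is a Condorcet winner: for every other candidate y, a strict majority of voters prefer the median winner to y. -/
open Finset

/-- If the number `N` of voters is odd and every voter's (strict, complete) preference,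
encoded by utilities `u v : Fin m → ℝ` with distinct values, is single-peaked with
respect to the common order of `Fin m` with peak `peak v`, then the median-rule winner
`t` (the first candidate where the cumulative number of peaks reaches `N/2`) is a
Condorcet winner: for every other candidate `y`, strictly more voters prefer `t` to `y`
than prefer `y` to `t`. -/
theorem stmt9 (m N : ℕ) (hm : 0 < m) (hN : Odd N)
    (u : Fin N → Fin m → ℝ)
    (huinj : ∀ v, Function.Injective (u v))
    (peak : Fin N → Fin m)
    (hpeak : ∀ v x, x ≠ peak v → u v x < u v (peak v))
    (hsp1 : ∀ v (i j : Fin m), i < j → j ≤ peak v → u v i < u v j)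
    (hsp2 : ∀ v (i j : Fin m), peak v ≤ i → i < j → u v j < u v i)
    (t : Fin m)
    (hmed1 : N ≤ 2 * (univ.filter fun v => peak v ≤ t).card)
    (hmed2 : 2 * (univ.filter fun v => peak v < t).card < N) :
    ∀ y, y ≠ t →
      (univ.filter fun v => u v t < u v y).card <
        (univ.filter fun v => u v y < u v t).card := by
  intro y hy
  have hne : ∀ v : Fin N, u v t ≠ u v y := fun v h => hy.symm (huinj v h)
  have hpart : (univ.filter fun v => u v y < u v t).card
      + (univ.filter fun v => u v t < u v y).card = N := by
    have h := Finset.card_filter_add_card_filter_not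
      (s := (univ : Finset (Fin N))) (p := fun v => u v y < u v t)
    have he : (univ.filter fun v => ¬ u v y < u v t)
        = (univ.filter fun v => u v t < u v y) := by
      apply Finset.filter_congr
      intro v _
      simp only [not_lt, eq_iff_iff]
      exact ⟨fun h => lt_of_le_of_ne h (hne v), le_of_lt⟩
    rw [he, Finset.card_univ, Fintype.card_fin] at h
    exact h
  have key : N < 2 * (univ.filter fun v => u v y < u v t).card := by
    rcases lt_or_gt_of_ne hy with hlt | hgt
    · -- y < t : voters with t ≤ peak prefer t to y
      have hsub : (univ.filter fun v => t ≤ peak v) ⊆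
          (univ.filter fun v => u v y < u v t) := by
        intro v hv
        simp only [mem_filter, mem_univ, true_and] at hv ⊢
        exact hsp1 v y t hlt hv
      have hcomp : (univ.filter fun v => peak v < t).card
          + (univ.filter fun v => t ≤ peak v).card = N := by
        have h := Finset.card_filter_add_card_filter_not
          (s := (univ : Finset (Fin N))) (p := fun v => peak v < t)
        have he : (univ.filter fun v => ¬ peak v < t)
            = (univ.filter fun v => t ≤ peak v) := by
          apply Finset.filter_congr
          intro v _
          simp [not_lt]
        rw [he, Finset.card_univ, Fintype.card_fin] at h
        exact h
      have := Finset.card_le_card hsub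
      omega
    · -- t < y : voters with peak ≤ t prefer t to y
      have hsub : (univ.filter fun v => peak v ≤ t) ⊆
          (univ.filter fun v => u v y < u v t) := by
        intro v hv
        simp only [mem_filter, mem_univ, true_and] at hv ⊢
        exact hsp2 v t y hv hgt
      have := Finset.card_le_card hsub
      obtain ⟨k, hk⟩ := hN
      omega
  omega
end

section
/- Fix small ε > 0 and let ψ₂ = log(2/ε)/log(1+ε). Let γ ∈ (0,1] and p be the unique positive integer with 1/(1+ε)^{p+1} ≤ γ < 1/(1+ε)^p. If an estimate e_i satisfies |e_i - γN| ≤ N/(1+ε)^i, then for all i ≥ p + ψ₂, e_i ≥ λ_i N where λ_i = ((1+ε)^{ψ₁} + 1)/(1+ε)^i and ψ₁ = log(1/ε)/log(1+ε), provided ε is sufficiently small (so that (1+ε)^{ψ₂-1} - 1 ≥ (1+ε)^{ψ₁} + 1). -/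
/-- Let `ψ₁ = log(1/ε)/log(1+ε)`, `ψ₂ = log(2/ε)/log(1+ε)` and
`λ_i = ((1+ε)^ψ₁ + 1)/(1+ε)^i`.  Let `p` be the unique positive integer with
`1/(1+ε)^(p+1) ≤ γ < 1/(1+ε)^p`.  If `|e i - γN| ≤ N/(1+ε)^i`, then for all
`i ≥ p + ψ₂` we have `e i ≥ λ_i * N`, provided `ε` is small enough that
`(1+ε)^(ψ₂-1) - 1 ≥ (1+ε)^ψ₁ + 1`. -/
theorem stmt13 (ε γ N : ℝ) (hε : 0 < ε) (hε1 : ε < 1) (hγ0 : 0 < γ) (hγ1 : γ ≤ 1)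
    (hN : 0 < N) (p : ℕ) (hp : 0 < p)
    (hplb : 1 / (1 + ε) ^ (p + 1) ≤ γ) (hpub : γ < 1 / (1 + ε) ^ p)
    (hsmall : (1 + ε) ^ (Real.log (1 / ε) / Real.log (1 + ε)) + 1 ≤
      (1 + ε) ^ (Real.log (2 / ε) / Real.log (1 + ε) - 1) - 1)
    (e : ℕ → ℝ) (i : ℕ)
    (hi : (p : ℝ) + Real.log (2 / ε) / Real.log (1 + ε) ≤ (i : ℝ))
    (he : |e i - γ * N| ≤ N / (1 + ε) ^ i) :
    ((1 + ε) ^ (Real.log (1 / ε) / Real.log (1 + ε)) + 1) / (1 + ε) ^ i * N ≤ e i := by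
  set b : ℝ := 1 + ε with hbdef
  have hb : (1 : ℝ) < b := by simp [hbdef]; linarith
  have hb0 : (0 : ℝ) < b := by linarith
  set ψ₁ := Real.log (1 / ε) / Real.log (1 + ε) with hψ₁
  set ψ₂ := Real.log (2 / ε) / Real.log (1 + ε) with hψ₂
  have hbi : (0 : ℝ) < b ^ i := pow_pos hb0 i
  have hbp1 : (0 : ℝ) < b ^ (p + 1) := pow_pos hb0 (p + 1)
  -- key: b^(ψ₂-1) * b^(p+1) ≤ b^i
  have hkey : b ^ (ψ₂ - 1) * (b : ℝ) ^ (p + 1) ≤ b ^ i := by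
    have h1 : b ^ (ψ₂ - 1) * (b : ℝ) ^ (p + 1) = b ^ (ψ₂ - 1 + ((p : ℝ) + 1)) := by
      rw [Real.rpow_add hb0, show ((p : ℝ) + 1) = ((p + 1 : ℕ) : ℝ) by push_cast; ring,
        Real.rpow_natCast]
    have h2 : (b : ℝ) ^ i = b ^ (i : ℝ) := (Real.rpow_natCast b i).symm
    rw [h1, h2]
    apply Real.rpow_le_rpow_left_iff hb |>.mpr
    linarith
  -- hence b^(ψ₂-1)/b^i ≤ 1/b^(p+1)
  have hdiv : b ^ (ψ₂ - 1) / b ^ i ≤ 1 / b ^ (p + 1) := by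
    rw [div_le_div_iff₀ hbi hbp1]
    linarith [hkey]
  have hγN : b ^ (ψ₂ - 1) / b ^ i * N ≤ γ * N := by
    apply mul_le_mul_of_nonneg_right _ hN.le
    exact hdiv.trans hplb
  have habs : γ * N - N / b ^ i ≤ e i := by
    have := abs_le.mp he
    linarith [this.1]
  have hfinal : (b ^ ψ₁ + 1) / b ^ i * N ≤ (b ^ (ψ₂ - 1) - 1) / b ^ i * N := by
    apply mul_le_mul_of_nonneg_right _ hN.le
    gcongr
  have heq : (b ^ (ψ₂ - 1) - 1) / b ^ i * N = b ^ (ψ₂ - 1) / b ^ i * N - N / b ^ i := by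
    field_simp
  calc (b ^ ψ₁ + 1) / b ^ i * N ≤ (b ^ (ψ₂ - 1) - 1) / b ^ i * N := hfinal
    _ = b ^ (ψ₂ - 1) / b ^ i * N - N / b ^ i := heq
    _ ≤ γ * N - N / b ^ i := by linarith
    _ ≤ e i := habs
end

section
/- Suppose an estimate σ of γN satisfies γN - N/(1+ε)^{p+ψ₂} ≤ σ ≤ γN + N/(1+ε)^{p+ψ₁+1}, where (1+ε)^{ψ₁} = 1/ε, (1+ε)^{ψ₂} = 2/ε, and p satisfies (1+ε)^{-(p+1)} ≤ γ. Then (1-ε)γN ≤ σ ≤ (1+ε)γN. -/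
/-- Suppose `(1+ε)^ψ₁ = 1/ε`, `(1+ε)^ψ₂ = 2/ε`, and `p` is a positive integer with
`1/(1+ε)^(p+1) ≤ γ < 1/(1+ε)^p`.  If the estimate `σ` of `γN` satisfies
`γN - N/(1+ε)^(p+ψ₂) ≤ σ ≤ γN + N/(1+ε)^(p+ψ₁+1)`, then
`(1-ε)γN ≤ σ ≤ (1+ε)γN`. -/
theorem stmt14 (ε γ N σ ψ₁ ψ₂ : ℝ) (hε : 0 < ε) (hε1 : ε < 1) (hγ0 : 0 < γ) (hγ1 : γ ≤ 1)
    (hN : 0 < N)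
    (hψ₁ : (1 + ε) ^ ψ₁ = 1 / ε) (hψ₂ : (1 + ε) ^ ψ₂ = 2 / ε)
    (p : ℕ) (hp : 0 < p)
    (hplb : 1 / (1 + ε) ^ (p + 1) ≤ γ) (hpub : γ < 1 / (1 + ε) ^ p)
    (hσlb : γ * N - N / (1 + ε) ^ ((p : ℝ) + ψ₂) ≤ σ)
    (hσub : σ ≤ γ * N + N / (1 + ε) ^ ((p : ℝ) + ψ₁ + 1)) :
    (1 - ε) * γ * N ≤ σ ∧ σ ≤ (1 + ε) * γ * N := by
  have h1 : (0:ℝ) < 1 + ε := by linarith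
  have hP : (0:ℝ) < (1 + ε) ^ p := pow_pos h1 p
  have hP1 : (0:ℝ) < (1 + ε) ^ (p + 1) := pow_pos h1 (p+1)
  have hA : (1 + ε) ^ ((p : ℝ) + ψ₂) = (1 + ε) ^ p * (2 / ε) := by
    rw [Real.rpow_add h1, hψ₂, Real.rpow_natCast]
  have hB : (1 + ε) ^ ((p : ℝ) + ψ₁ + 1) = (1 + ε) ^ (p + 1) * (1 / ε) := by
    rw [Real.rpow_add h1, Real.rpow_add h1, hψ₁, Real.rpow_one, Real.rpow_natCast, pow_succ]
    ring
  have hplb' : 1 ≤ γ * (1 + ε) ^ (p + 1) := by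
    rw [div_le_iff₀ hP1] at hplb; linarith
  have key2 : N / (1 + ε) ^ ((p : ℝ) + ψ₁ + 1) ≤ ε * (γ * N) := by
    rw [hB, div_le_iff₀ (by positivity)]
    have : N ≤ γ * (1 + ε) ^ (p + 1) * N := by nlinarith
    calc N ≤ γ * (1 + ε) ^ (p + 1) * N := this
    _ = ε * (γ * N) * ((1 + ε) ^ (p + 1) * (1 / ε)) := by field_simp
  have key1 : N / (1 + ε) ^ ((p : ℝ) + ψ₂) ≤ ε * (γ * N) := by
    rw [hA, div_le_iff₀ (by positivity)]
    have h2 : (1 + ε) ^ (p + 1) ≤ 2 * (1 + ε) ^ p := by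
      rw [pow_succ]; nlinarith
    have h3 : 1 ≤ 2 * γ * (1 + ε) ^ p := by
      nlinarith [mul_le_mul_of_nonneg_left h2 hγ0.le]
    have : N ≤ 2 * γ * (1 + ε) ^ p * N := by
      nlinarith [mul_le_mul_of_nonneg_right h3 hN.le]
    calc N ≤ 2 * γ * (1 + ε) ^ p * N := this
    _ = ε * (γ * N) * ((1 + ε) ^ p * (2 / ε)) := by field_simp
  constructor <;> nlinarith
end

section
/- Let g : C → [0,N] be a function on a finite set C of candidates with Σ_{x∈C} g(x) = N, and let λ > 2N. Then Σ_{x∈C} exp(−λ/g(x)) ≤ exp(−λ/N), with the convention exp(−λ/0) = 0. That is, the sum is maximized when one candidate has all N votes. -/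
open Finset

private lemma exp_add_exp_le_one {u v : ℝ} (hu : 0 < u) (hv : 0 < v) (huv : 1 ≤ u * v) :
    Real.exp (-u) + Real.exp (-v) ≤ 1 := by
  have h1 : Real.exp (-u) ≤ 1 / (1 + u) := by
    rw [Real.exp_neg]
    rw [inv_eq_one_div]
    apply one_div_le_one_div_of_le (by linarith)
    linarith [Real.add_one_le_exp u]
  have h2 : Real.exp (-v) ≤ 1 / (1 + v) := by
    rw [Real.exp_neg, inv_eq_one_div]
    apply one_div_le_one_div_of_le (by linarith)
    linarith [Real.add_one_le_exp v]
  have h3 : 1 / (1 + u) + 1 / (1 + v) ≤ 1 := by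
    rw [div_add_div _ _ (by positivity) (by positivity), div_le_one (by positivity)]
    nlinarith
  linarith

/-- superadditivity of `exp (-lam / ·)` on positives. -/
private lemma key {a b lam : ℝ} (ha : 0 < a) (hb : 0 < b) (hlam : a + b ≤ lam) :
    Real.exp (-lam / a) + Real.exp (-lam / b) ≤ Real.exp (-lam / (a + b)) := by
  have hs : 0 < a + b := by linarith
  have hlam0 : 0 < lam := lt_of_lt_of_le hs hlam
  set u : ℝ := lam * b / (a * (a + b)) with hu
  set v : ℝ := lam * a / (b * (a + b)) with hv
  have hupos : 0 < u := by positivity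
  have hvpos : 0 < v := by positivity
  have ha' : a ≠ 0 := ha.ne'
  have hb' : b ≠ 0 := hb.ne'
  have hs' : a + b ≠ 0 := hs.ne'
  have huv : 1 ≤ u * v := by
    rw [hu, hv, div_mul_div_comm]
    rw [le_div_iff₀ (by positivity)]
    have hsq : (a + b) * (a + b) ≤ lam * lam :=
      mul_le_mul hlam hlam hs.le hlam0.le
    nlinarith [mul_pos ha hb]
  have hkey := exp_add_exp_le_one hupos hvpos huv
  have e1 : -lam / a = -lam / (a + b) + -u := by
    rw [hu]; field_simp; ring
  have e2 : -lam / b = -lam / (a + b) + -v := by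
    rw [hv]; field_simp; ring
  calc Real.exp (-lam / a) + Real.exp (-lam / b)
      = Real.exp (-lam / (a + b)) * (Real.exp (-u) + Real.exp (-v)) := by
        rw [e1, e2, Real.exp_add, Real.exp_add]; ring
    _ ≤ Real.exp (-lam / (a + b)) * 1 := by
        exact mul_le_mul_of_nonneg_left hkey (Real.exp_nonneg _)
    _ = Real.exp (-lam / (a + b)) := mul_one _

private lemma key' {a b lam : ℝ} (ha : 0 ≤ a) (hb : 0 ≤ b) (hlam0 : 0 < lam)
    (hlam : a + b ≤ lam) :
    (if a = 0 then 0 else Real.exp (-lam / a)) + (if b = 0 then 0 else Real.exp (-lam / b))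
      ≤ if a + b = 0 then 0 else Real.exp (-lam / (a + b)) := by
  rcases eq_or_lt_of_le ha with ha0 | ha0
  · simp [← ha0]
  rcases eq_or_lt_of_le hb with hb0 | hb0
  · simp [← hb0]
  rw [if_neg (by positivity), if_neg (by positivity), if_neg (by positivity)]
  exact key ha0 hb0 hlam

private lemma sum_le {C : Type*} [Fintype C] (lam : ℝ) (g : C → ℝ) (hg0 : ∀ x, 0 ≤ g x)
    (hlam0 : 0 < lam) (s : Finset C) (hlam : ∑ x ∈ s, g x ≤ lam) :
    ∑ x ∈ s, (if g x = 0 then 0 else Real.exp (-lam / g x))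
      ≤ if (∑ x ∈ s, g x) = 0 then 0 else Real.exp (-lam / ∑ x ∈ s, g x) := by
  classical
  induction s using Finset.induction with
  | empty => simp
  | @insert a t ha ih =>
    rw [Finset.sum_insert ha, Finset.sum_insert ha] at *
    have hb : 0 ≤ ∑ x ∈ t, g x := Finset.sum_nonneg fun x _ => hg0 x
    have ih' := ih (by linarith [hg0 a])
    calc _ ≤ (if g a = 0 then 0 else Real.exp (-lam / g a)) +
            (if (∑ x ∈ t, g x) = 0 then 0 else Real.exp (-lam / ∑ x ∈ t, g x)) := by
            gcongr
          _ ≤ _ := key' (hg0 a) hb hlam0 (by linarith)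

/-- Let `g : C → [0,N]` assign vote counts to the finitely many candidates, with
`∑ g x = N`, and let `λ > 2N`.  Then `∑_x exp (-λ / g x) ≤ exp (-λ / N)`, with the
convention that the summand is `0` when `g x = 0`: the sum is maximized when one
candidate has all `N` votes. -/
theorem stmt16 {C : Type*} [Fintype C] [Nonempty C] (N lam : ℝ) (g : C → ℝ)
    (hg0 : ∀ x, 0 ≤ g x) (hgN : ∀ x, g x ≤ N) (hsum : ∑ x, g x = N)
    (hlam : 2 * N < lam) :
    ∑ x, (if g x = 0 then 0 else Real.exp (-lam / g x)) ≤ Real.exp (-lam / N) := by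
  have hN : 0 ≤ N := hsum ▸ Finset.sum_nonneg fun x _ => hg0 x
  have hlam0 : 0 < lam := by linarith
  have h := sum_le lam g hg0 hlam0 Finset.univ (by rw [hsum]; linarith)
  rw [hsum] at h
  rcases eq_or_lt_of_le hN with h0 | h0
  · rw [← h0] at h ⊢
    simp only [if_pos rfl] at h
    exact h.trans (Real.exp_nonneg _)
  · rwa [if_neg (ne_of_gt h0)] at h
end

section
/- In a two-candidate district-based plurality election with N voters in k districts each of population at most κn (n = N/k), where A wins and the district margins in A's districts bound total MOV: if J is the set of districts in I = {d won by A : MOV(E_d) ≥ εn/2} with MOV(E_d) ≤ ε²n_d/64, then every district in J has population n_d ≥ 32n/ε, and consequently |J| ≤ εk/31. -/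
open Finset

/-- Two-candidate district-based plurality election: `k` districts with populations
`popd j` summing to `N`, average population `n = N/k`, and district-level margins of
victory `mov j`.  Let `I` be a set of districts won by A with `mov j ≥ εn/2` for all
`j ∈ I` and `|I| ≥ (1/2 + 3ε/16)k`, and suppose every district of `I \ J` has
population at least `εn - 1`, where `J = {j ∈ I : mov j ≤ ε² popd j / 64}`.
Then every district of `J` has population at least `32n/ε`, and `|J| ≤ εk/31`. -/
theorem stmt18 {k : ℕ} (hk : 0 < k) (N n ε : ℝ) (hN : 0 < N)
    (popd mov : Fin k → ℝ)
    (hε0 : 0 < ε) (hε1 : ε ≤ 1)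
    (hn : n = N / k) (hpop0 : ∀ j, 0 ≤ popd j) (hpopsum : ∑ j, popd j = N)
    (I : Finset (Fin k))
    (hImov : ∀ j ∈ I, ε * n / 2 ≤ mov j)
    (hIcard : (1 / 2 + 3 * ε / 16) * k ≤ (I.card : ℝ))
    (J : Finset (Fin k)) (hJ : J = I.filter fun j => mov j ≤ ε ^ 2 * popd j / 64)
    (hIJ : ∀ j ∈ I \ J, ε * n - 1 ≤ popd j) :
    (∀ j ∈ J, 32 * n / ε ≤ popd j) ∧ (J.card : ℝ) ≤ ε * k / 31 := by
  have hk' : (0:ℝ) < k := by exact_mod_cast hk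
  have hn0 : 0 < n := by rw [hn]; positivity
  have hmain : ∀ j ∈ J, 32 * n / ε ≤ popd j := by
    intro j hj
    rw [hJ, Finset.mem_filter] at hj
    obtain ⟨hjI, hle⟩ := hj
    have h1 := hImov j hjI
    rw [div_le_iff₀ hε0]
    nlinarith [sq_nonneg ε]
  refine ⟨hmain, ?_⟩
  have hsum1 : (J.card : ℝ) * (32 * n / ε) ≤ ∑ j ∈ J, popd j := by
    have := Finset.card_nsmul_le_sum J popd (32 * n / ε) (fun j hj => hmain j hj)
    simpa [nsmul_eq_mul] using this
  have hsum2 : ∑ j ∈ J, popd j ≤ N := by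
    rw [← hpopsum]
    exact Finset.sum_le_sum_of_subset_of_nonneg (Finset.subset_univ J)
      (fun j _ _ => hpop0 j)
  have hN' : N = n * k := by rw [hn]; field_simp
  have h3 : (J.card : ℝ) * (32 * n / ε) ≤ n * k := by linarith
  rw [mul_div_assoc', div_le_iff₀ hε0] at h3
  rw [le_div_iff₀ (by norm_num : (0:ℝ) < 31)]
  have hJge : (0:ℝ) ≤ (J.card : ℝ) := Nat.cast_nonneg _
  nlinarith [mul_nonneg hJge hn0.le]
end
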